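/- arXiv:1709.03589 — 3 statements merged into one kernel-verified Lean document; each statement's English description precedes it below -/
import Mathlib

section
/- Let V be an n-dimensional real vector space, let (F,G,H) be a transverse triple of complete flags in V, and let i,j,k ≥ 1 be integers with i+j+k = n. Then for every real number t there exists an invertible linear automorphism u of V such that for all 0 ≤ m ≤ n: u(F^(m)) = F^(m), u(G^(m)) = exp(t·A^{i,j,k}_{F,G,H})(G^(m)), and u(exp(t·A^{j,k,i}_{G,H,F})(H^(m))) = H^(m). -/
/-! The automorphism is `u = exp (t A)`. It acts by nonzero scalars on `F i` and on the
complementary subspace `G j + H k`; since every `F m` either lies in `F i` or contains it, the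
modular law splits `F m` along this decomposition and `u` preserves it. Likewise
`exp (t A) ∘ exp (t A')` acts by scalars on `H k` and on `F i + G j`: on `F i` and on `G j` it
multiplies by `exp (t (n - i - j) / n)` and `exp (t (n - j - i) / n)`, which coincide, so it
preserves every `H m`. -/

/-- `F` is a complete flag in an `n`-dimensional real vector space:
`F 0 ⊆ F 1 ⊆ ⋯ ⊆ F n` with `dim (F l) = l` for `0 ≤ l ≤ n`. -/
def IsFlag (n : ℕ) {V : Type*} [AddCommGroup V] [Module ℝ V]
    (F : ℕ → Submodule ℝ V) : Prop :=
  (∀ l, l < n → F l ≤ F (l + 1)) ∧ ∀ l, l ≤ n → Module.finrank ℝ (F l) = l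

/-- A triple of flags is transverse if `F a + G b + H c = V` whenever `a + b + c = n`. -/
def TransverseTriple (n : ℕ) {V : Type*} [AddCommGroup V] [Module ℝ V]
    (F G H : ℕ → Submodule ℝ V) : Prop :=
  ∀ a b c : ℕ, a + b + c = n → F a ⊔ G b ⊔ H c = ⊤

/-- A pair of flags is transverse if `F a + G (n - a) = V` for all `0 ≤ a ≤ n`. -/
def TransversePair (n : ℕ) {V : Type*} [AddCommGroup V] [Module ℝ V]
    (F G : ℕ → Submodule ℝ V) : Prop :=
  ∀ a, a ≤ n → F a ⊔ G (n - a) = ⊤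

/-- `A` is the `(i,j,k)`-eruption endomorphism of the triple `(F,G,H)`: it acts as the
scalar `(n - i)/n` on `F i` and as the scalar `-i/n` on `G j + H k`. -/
def IsEruption (n i j k : ℕ) {V : Type*} [AddCommGroup V] [Module ℝ V]
    (F G H : ℕ → Submodule ℝ V) (A : Module.End ℝ V) : Prop :=
  (∀ v ∈ F i, A v = (((n : ℝ) - (i : ℝ)) / (n : ℝ)) • v) ∧
  (∀ v ∈ G j ⊔ H k, A v = (-(i : ℝ) / (n : ℝ)) • v)

/-- `A` is the `(i, n-i)`-shearing endomorphism of the pair `(F,G)`: it acts as the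
scalar `(n - i)/n` on `F i` and as the scalar `-i/n` on `G (n - i)`. -/
def IsShearing (n i : ℕ) {V : Type*} [AddCommGroup V] [Module ℝ V]
    (F G : ℕ → Submodule ℝ V) (A : Module.End ℝ V) : Prop :=
  (∀ v ∈ F i, A v = (((n : ℝ) - (i : ℝ)) / (n : ℝ)) • v) ∧
  (∀ v ∈ G (n - i), A v = (-(i : ℝ) / (n : ℝ)) • v)

/-- The exponential of an endomorphism of a finite-dimensional real vector space. -/
noncomputable def expEnd {V : Type*} [NormedAddCommGroup V] [NormedSpace ℝ V]
    [FiniteDimensional ℝ V] (A : Module.End ℝ V) : Module.End ℝ V :=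
  (NormedSpace.exp (LinearMap.toContinuousLinearMap A)).toLinearMap


open Module End

section Eigenspace

variable {K V : Type*} [Field K] [AddCommGroup V] [Module K V]

lemma Submodule.map_eq_self_of_le_eigenspace {B : End K V} {c : K} (hc : c ≠ 0)
    {W : Submodule K V} (hW : W ≤ B.eigenspace c) : W.map B = W := by
  have hB : ∀ v ∈ W, B v = c • v := fun v hv => mem_eigenspace_iff.mp (hW hv)
  refine le_antisymm ?_ fun v hv => ⟨c⁻¹ • v, W.smul_mem _ hv, ?_⟩
  · rintro _ ⟨v, hv, rfl⟩
    rw [hB v hv]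
    exact W.smul_mem c hv
  · rw [hB _ (W.smul_mem _ hv), smul_inv_smul₀ hc]

lemma Submodule.map_eq_self_of_le_of_sup_eq_top {B : End K V} {c d : K} (hc : c ≠ 0)
    (hd : d ≠ 0) {P S W : Submodule K V} (hP : P ≤ B.eigenspace c) (hS : S ≤ B.eigenspace d)
    (hPS : P ⊔ S = ⊤) (hPW : P ≤ W) : W.map B = W := by
  have hW : P ⊔ S ⊓ W = W := by rw [← sup_inf_assoc_of_le S hPW, hPS, top_inf_eq]
  rw [← hW, Submodule.map_sup, map_eq_self_of_le_eigenspace hc hP,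
    map_eq_self_of_le_eigenspace hd (inf_le_left.trans hS)]

lemma Module.End.eigenspace_le_eigenspace_smul (A : End K V) (t c : K) :
    A.eigenspace c ≤ (t • A).eigenspace (t * c) := fun v hv => by
  rw [mem_eigenspace_iff, LinearMap.smul_apply, mem_eigenspace_iff.mp hv, smul_smul]

lemma Module.End.eigenspace_inf_eigenspace_le_eigenspace_mul (B C : End K V) (b c : K) :
    B.eigenspace b ⊓ C.eigenspace c ≤ (B * C).eigenspace (b * c) := fun v ⟨hb, hc⟩ => by
  rw [mem_eigenspace_iff, Module.End.mul_apply, mem_eigenspace_iff.mp hc, map_smul,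
    mem_eigenspace_iff.mp hb, smul_smul, mul_comm]

end Eigenspace

section Exp

variable {V : Type*} [NormedAddCommGroup V] [NormedSpace ℝ V] [FiniteDimensional ℝ V]

lemma eigenspace_le_eigenspace_expEnd (A : End ℝ V) (c : ℝ) :
    A.eigenspace c ≤ (expEnd A).eigenspace (Real.exp c) := fun v hv => by
  set T := LinearMap.toContinuousLinearMap A
  have hpow : ∀ m : ℕ, (T ^ m) v = c ^ m • v := fun m => by
    induction m with
    | zero => simp
    | succ m ih =>
      rw [pow_succ, mul_apply_eq_comp, show T v = c • v from mem_eigenspace_iff.mp hv, map_smul,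
        ih, smul_smul, pow_succ']
  have hT :=
    (NormedSpace.exp_series_hasSum_exp' (𝕂 := ℝ) T).mapL (ContinuousLinearMap.apply ℝ V v)
  have hc := (NormedSpace.exp_series_hasSum_exp' (𝕂 := ℝ) c).smul_const v
  simp only [ContinuousLinearMap.apply_apply, smul_apply, hpow, smul_smul, smul_eq_mul] at hT hc
  rw [mem_eigenspace_iff, Real.exp_eq_exp_ℝ]
  exact hT.unique hc

lemma isUnit_expEnd (A : End ℝ V) : IsUnit (expEnd A) := by
  let : NormedAlgebra ℚ (V →L[ℝ] V) := NormedAlgebra.restrictScalars ℚ ℝ _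
  exact (NormedSpace.isUnit_exp _).map ContinuousLinearMap.toLinearMapRingHom

end Exp

lemma IsFlag.mono {n : ℕ} {V : Type*} [AddCommGroup V] [Module ℝ V] {F : ℕ → Submodule ℝ V}
    (hF : IsFlag n F) {a b : ℕ} (hab : a ≤ b) (hbn : b ≤ n) : F a ≤ F b := by
  induction b, hab using Nat.le_induction with
  | base => exact le_rfl
  | succ b _ ih => exact (ih (by omega)).trans (hF.1 b (by omega))

lemma IsFlag.map_eq_self_of_sup_eq_top {n : ℕ} {V : Type*} [AddCommGroup V] [Module ℝ V]
    {F : ℕ → Submodule ℝ V} (hF : IsFlag n F) {p : ℕ} (hp : p ≤ n) {B : End ℝ V} {c d : ℝ}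
    (hc : c ≠ 0) (hd : d ≠ 0) {S : Submodule ℝ V} (hP : F p ≤ B.eigenspace c)
    (hS : S ≤ B.eigenspace d) (hPS : F p ⊔ S = ⊤) {m : ℕ} (hm : m ≤ n) :
    (F m).map B = F m := by
  rcases le_total m p with h | h
  · exact Submodule.map_eq_self_of_le_eigenspace hc ((hF.mono h hp).trans hP)
  · exact Submodule.map_eq_self_of_le_of_sup_eq_top hc hd hP hS hPS (hF.mono h hm)

lemma IsEruption.le_eigenspace_expEnd {n i j k : ℕ} {V : Type*} [NormedAddCommGroup V]
    [NormedSpace ℝ V] [FiniteDimensional ℝ V] {F G H : ℕ → Submodule ℝ V} {A : End ℝ V}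
    (hA : IsEruption n i j k F G H A) (t : ℝ) :
    F i ≤ (expEnd (t • A)).eigenspace (Real.exp (t * ((n - i) / n))) ∧
      G j ⊔ H k ≤ (expEnd (t • A)).eigenspace (Real.exp (t * (-i / n))) :=
  ⟨fun v hv => eigenspace_le_eigenspace_expEnd _ _ <| eigenspace_le_eigenspace_smul _ _ _ <|
      mem_eigenspace_iff.mpr (hA.1 v hv),
    fun v hv => eigenspace_le_eigenspace_expEnd _ _ <| eigenspace_le_eigenspace_smul _ _ _ <|
      mem_eigenspace_iff.mpr (hA.2 v hv)⟩

theorem statement2_general (n : ℕ) (V : Type*) [NormedAddCommGroup V] [NormedSpace ℝ V]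
    [FiniteDimensional ℝ V]
    (F G H : ℕ → Submodule ℝ V) (hF : IsFlag n F) (hH : IsFlag n H)
    (hFGH : TransverseTriple n F G H)
    (i j k : ℕ) (hijk : i + j + k = n)
    (A A' : Module.End ℝ V) (hA : IsEruption n i j k F G H A)
    (hA' : IsEruption n j k i G H F A') (t : ℝ) :
    ∃ u : V ≃ₗ[ℝ] V, ∀ m, m ≤ n →
      Submodule.map (u : V →ₗ[ℝ] V) (F m) = F m ∧
      Submodule.map (u : V →ₗ[ℝ] V) (G m) = Submodule.map (expEnd (t • A)) (G m) ∧
      Submodule.map (u : V →ₗ[ℝ] V) (Submodule.map (expEnd (t • A')) (H m)) = H m := by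
  obtain ⟨hBF, hBGH⟩ := hA.le_eigenspace_expEnd t
  obtain ⟨hB'G, hB'HF⟩ := hA'.le_eigenspace_expEnd t
  set B := expEnd (t • A)
  set B' := expEnd (t • A')
  have hBB'H : H k ≤ (B * B').eigenspace (Real.exp (t * (-i / n)) * Real.exp (t * (-j / n))) :=
    (le_inf (le_sup_right.trans hBGH) (le_sup_left.trans hB'HF)).trans
      (eigenspace_inf_eigenspace_le_eigenspace_mul _ _ _ _)
  have hBB'FG : F i ⊔ G j ≤
      (B * B').eigenspace (Real.exp (t * ((n - i) / n)) * Real.exp (t * (-j / n))) := by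
    have hswap : Real.exp (t * ((n - i) / n)) * Real.exp (t * (-j / n)) =
        Real.exp (t * (-i / n)) * Real.exp (t * ((n - j) / n)) := by
      rw [← Real.exp_add, ← Real.exp_add]
      ring_nf
    refine sup_le ((le_inf hBF (le_sup_right.trans hB'HF)).trans
      (eigenspace_inf_eigenspace_le_eigenspace_mul _ _ _ _)) ?_
    rw [hswap]
    exact (le_inf (le_sup_left.trans hBGH) hB'G).trans
      (eigenspace_inf_eigenspace_le_eigenspace_mul _ _ _ _)
  have hFGH' : F i ⊔ (G j ⊔ H k) = ⊤ := by rw [← sup_assoc]; exact hFGH i j k hijk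
  have hHFG : H k ⊔ (F i ⊔ G j) = ⊤ := by rw [sup_comm]; exact hFGH i j k hijk
  refine ⟨LinearMap.GeneralLinearGroup.generalLinearEquiv ℝ V (isUnit_expEnd (t • A)).unit,
    fun m hm => ⟨?_, rfl, ?_⟩⟩
  · exact hF.map_eq_self_of_sup_eq_top (by omega) (by positivity) (by positivity) hBF hBGH
      hFGH' hm
  · rw [← Submodule.map_comp]
    exact hH.map_eq_self_of_sup_eq_top (by omega) (by positivity) (by positivity) hBB'H hBB'FG
      hHFG hm

theorem statement2 (n : ℕ) (V : Type*) [NormedAddCommGroup V] [NormedSpace ℝ V]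
    [FiniteDimensional ℝ V] (hV : Module.finrank ℝ V = n)
    (F G H : ℕ → Submodule ℝ V) (hF : IsFlag n F) (hG : IsFlag n G) (hH : IsFlag n H)
    (hFGH : TransverseTriple n F G H)
    (i j k : ℕ) (hi : 1 ≤ i) (hj : 1 ≤ j) (hk : 1 ≤ k) (hijk : i + j + k = n)
    (A A' : Module.End ℝ V) (hA : IsEruption n i j k F G H A)
    (hA' : IsEruption n j k i G H F A') (t : ℝ) :
    ∃ u : V ≃ₗ[ℝ] V, ∀ m, m ≤ n →
      Submodule.map (u : V →ₗ[ℝ] V) (F m) = F m ∧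
      Submodule.map (u : V →ₗ[ℝ] V) (G m) = Submodule.map (expEnd (t • A)) (G m) ∧
      Submodule.map (u : V →ₗ[ℝ] V) (Submodule.map (expEnd (t • A')) (H m)) = H m :=
  statement2_general n V F G H hF hH hFGH i j k hijk A A' hA hA' t
end

section
/- Let V be an n-dimensional real vector space, let (F,G,H) be a transverse triple of complete flags in V, and let i,j,k,i',j',k' ∈ {0,…,n−1} be integers with i+j+k = n = i'+j'+k'. Then tr(A^{i,j,k}_{F,G,H} ∘ A^{j',k',i'}_{G,H,F}) = max(0, min(i−i', j'−j)) − (i·j')/n. In particular this trace does not depend on F, G, H. -/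
open Module LinearMap

lemma IsFlag.le_of_le {n : ℕ} {V : Type*} [AddCommGroup V] [Module ℝ V]
    {F : ℕ → Submodule ℝ V} (hF : IsFlag n F) {a b : ℕ} (hab : a ≤ b) (hb : b ≤ n) :
    F a ≤ F b := by
  induction b, hab using Nat.le_induction with
  | base => exact le_rfl
  | succ m _ ih => exact (ih (by omega)).trans (hF.1 m (by omega))

lemma TransverseTriple.rotate {n : ℕ} {V : Type*} [AddCommGroup V] [Module ℝ V]
    {F G H : ℕ → Submodule ℝ V} (h : TransverseTriple n F G H) : TransverseTriple n G H F :=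
  fun a b c habc => by rw [sup_comm, ← sup_assoc]; exact h c a b (by omega)

lemma TransverseTriple.codisjoint {n : ℕ} {V : Type*} [AddCommGroup V] [Module ℝ V]
    {F G H : ℕ → Submodule ℝ V} (h : TransverseTriple n F G H) {a b c : ℕ}
    (habc : a + b + c = n) : Codisjoint (F a) (G b ⊔ H c) := by
  rw [codisjoint_iff, ← sup_assoc]
  exact h a b c habc

structure IsProjAlong {K V : Type*} [Field K] [AddCommGroup V] [Module K V]
    (U W : Submodule K V) (P : Module.End K V) : Prop where
  codisjoint : Codisjoint U W
  map_id : ∀ u ∈ U, P u = u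
  map_zero : ∀ w ∈ W, P w = 0

namespace IsProjAlong

variable {K V : Type*} [Field K] [AddCommGroup V] [Module K V]
  {U W : Submodule K V} {P : Module.End K V}

lemma isProj (hP : IsProjAlong U W P) : IsProj U P where
  map_mem v := by
    obtain ⟨u, w, hu, hw, rfl⟩ := Submodule.codisjoint_iff_exists_add_eq.mp hP.codisjoint v
    rwa [map_add, hP.map_id u hu, hP.map_zero w hw, add_zero]
  map_id := hP.map_id

lemma one_sub (hP : IsProjAlong U W P) : IsProjAlong W U (1 - P) where
  codisjoint := hP.codisjoint.symm
  map_id w hw := by simp [hP.map_zero w hw]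
  map_zero u hu := by simp [hP.map_id u hu]

lemma trace [FiniteDimensional K V] (hP : IsProjAlong U W P) :
    LinearMap.trace K V P = finrank K U :=
  hP.isProj.trace

lemma mul_eq_zero_of_le {U' W' : Submodule K V} {Q : Module.End K V}
    (hP : IsProjAlong U W P) (hQ : IsProjAlong U' W' Q) (h : U' ≤ W) : P * Q = 0 := by
  ext v
  exact hP.map_zero _ (h (hQ.isProj.map_mem v))

lemma isProj_mul_one_sub {X Y U' W' : Submodule K V} {Q : Module.End K V}
    (hP : IsProjAlong U (X ⊔ Y) P) (hQ : IsProjAlong U' W' Q) (hX : X ≤ U') (hY : Y ≤ W') :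
    IsProj X (Q * (1 - P)) where
  map_mem v := by
    obtain ⟨x, hx, y, hy, hxy⟩ := Submodule.mem_sup.mp (hP.one_sub.isProj.map_mem v)
    rw [Module.End.mul_apply, ← hxy, map_add, hQ.map_id x (hX hx), hQ.map_zero y (hY hy),
      add_zero]
    exact hx
  map_id x hx := by
    rw [Module.End.mul_apply, hP.one_sub.map_id x (Submodule.mem_sup_left hx),
      hQ.map_id x (hX hx)]

lemma trace_mul_of_le_of_le [FiniteDimensional K V] {X Y U' W' : Submodule K V}
    {Q : Module.End K V} (hP : IsProjAlong U (X ⊔ Y) P) (hQ : IsProjAlong U' W' Q)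
    (hX : X ≤ U') (hY : Y ≤ W') :
    LinearMap.trace K V (Q * P) = finrank K U' - finrank K X := by
  have hQP : Q * P = Q - Q * (1 - P) := by noncomm_ring
  rw [hQP, map_sub, hQ.trace, (hP.isProj_mul_one_sub hQ hX hY).trace]

end IsProjAlong

lemma LinearMap.trace_sub_smul_one_mul_sub_smul_one {K V : Type*} [Field K] [AddCommGroup V]
    [Module K V] [FiniteDimensional K V] (P Q : Module.End K V) (a b : K) :
    trace K V ((P - a • 1) * (Q - b • 1)) =
      trace K V (P * Q) - b * trace K V P - a * trace K V Q + a * b * finrank K V := by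
  simp only [sub_mul, mul_sub, mul_smul_comm, smul_mul_assoc, one_mul,
    mul_one, map_sub, map_smul, trace_one, smul_eq_mul]
  ring

lemma IsEruption.isProjAlong {n i j k : ℕ} {V : Type*} [AddCommGroup V] [Module ℝ V]
    {F G H : ℕ → Submodule ℝ V} {A : Module.End ℝ V} (hA : IsEruption n i j k F G H A)
    (hn : n ≠ 0) (hcd : Codisjoint (F i) (G j ⊔ H k)) :
    IsProjAlong (F i) (G j ⊔ H k) (A + ((i : ℝ) / n) • 1) where
  codisjoint := hcd
  map_id v hv := by
    rw [LinearMap.add_apply, hA.1 v hv, LinearMap.smul_apply, Module.End.one_apply, ← add_smul]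
    rw [← add_div, sub_add_cancel, div_self (by exact_mod_cast hn), one_smul]
  map_zero v hv := by
    rw [LinearMap.add_apply, hA.2 v hv, LinearMap.smul_apply, Module.End.one_apply, ← add_smul]
    rw [← add_div, neg_add_cancel, zero_div, zero_smul]

lemma IsFlag.trace_mul_of_isProjAlong {n : ℕ} {V : Type*} [AddCommGroup V] [Module ℝ V]
    [FiniteDimensional ℝ V] {F G H : ℕ → Submodule ℝ V} (hF : IsFlag n F) (hG : IsFlag n G)
    (hH : IsFlag n H) {i j k i' j' k' : ℕ} (hijk : i + j + k = n) (hijk' : i' + j' + k' = n)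
    {P Q : Module.End ℝ V} (hP : IsProjAlong (F i) (G j ⊔ H k) P)
    (hQ : IsProjAlong (G j') (H k' ⊔ F i') Q) :
    trace ℝ V (P * Q) = max 0 (min ((i : ℝ) - i') ((j' : ℝ) - j)) := by
  rcases le_or_gt j' j with hjj | hjj
  · rw [hP.mul_eq_zero_of_le hQ ((hG.le_of_le hjj (by omega)).trans le_sup_left), map_zero]
    rify at hjj
    grind
  rcases le_or_gt i i' with hii | hii
  · rw [trace_mul_comm, hQ.mul_eq_zero_of_le hP ((hF.le_of_le hii (by omega)).trans le_sup_right),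
      map_zero]
    rify at hii
    grind
  rcases le_or_gt k k' with hkk | hkk
  · rw [trace_mul_comm, hP.trace_mul_of_le_of_le hQ (hG.le_of_le hjj.le (by omega))
      ((hH.le_of_le hkk (by omega)).trans le_sup_left), hG.2 j' (by omega), hG.2 j (by omega)]
    rify at hijk hijk' hjj hii hkk
    grind
  · rw [sup_comm] at hQ
    rw [hQ.trace_mul_of_le_of_le hP (hF.le_of_le hii.le (by omega))
      ((hH.le_of_le hkk.le (by omega)).trans le_sup_right), hF.2 i (by omega), hF.2 i' (by omega)]
    rify at hijk hijk' hjj hii hkk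
    grind

theorem statement7_general (n : ℕ) (V : Type*) [AddCommGroup V] [Module ℝ V] [FiniteDimensional ℝ V]
    (hV : Module.finrank ℝ V = n)
    (F G H : ℕ → Submodule ℝ V) (hF : IsFlag n F) (hG : IsFlag n G) (hH : IsFlag n H)
    (hFGH : TransverseTriple n F G H)
    (i j k i' j' k' : ℕ)
    (hijk : i + j + k = n) (hijk' : i' + j' + k' = n)
    (A B : Module.End ℝ V)
    (hA : IsEruption n i j k F G H A) (hB : IsEruption n j' k' i' G H F B) :
    LinearMap.trace ℝ V (A ∘ₗ B) =
      max 0 (min ((i : ℝ) - (i' : ℝ)) ((j' : ℝ) - (j : ℝ))) - (i : ℝ) * (j' : ℝ) / (n : ℝ) := by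
  rcases Nat.eq_zero_or_pos n with rfl | hn
  · have : Subsingleton V := finrank_zero_iff.mp hV
    obtain ⟨rfl, rfl⟩ : i = 0 ∧ j' = 0 := by omega
    simp [Subsingleton.elim (A ∘ₗ B) 0]
  have hP := hA.isProjAlong hn.ne' (hFGH.codisjoint hijk)
  have hQ := hB.isProjAlong hn.ne' (hFGH.rotate.codisjoint (by omega))
  have hAB : A ∘ₗ B = (A + ((i : ℝ) / n) • 1 - ((i : ℝ) / n) • 1) *
      (B + ((j' : ℝ) / n) • 1 - ((j' : ℝ) / n) • 1) := by
    simp only [add_sub_cancel_right, Module.End.mul_eq_comp]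
  rw [hAB, trace_sub_smul_one_mul_sub_smul_one, hF.trace_mul_of_isProjAlong hG hH hijk hijk' hP hQ,
    hP.trace, hQ.trace, hF.2 i (by omega), hG.2 j' (by omega), hV]
  field_simp
  ring

theorem statement7 (n : ℕ) (V : Type*) [AddCommGroup V] [Module ℝ V] [FiniteDimensional ℝ V]
    (hV : Module.finrank ℝ V = n)
    (F G H : ℕ → Submodule ℝ V) (hF : IsFlag n F) (hG : IsFlag n G) (hH : IsFlag n H)
    (hFGH : TransverseTriple n F G H)
    (i j k i' j' k' : ℕ) (hi : i < n) (hj : j < n) (hk : k < n)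
    (hi' : i' < n) (hj' : j' < n) (hk' : k' < n)
    (hijk : i + j + k = n) (hijk' : i' + j' + k' = n)
    (A B : Module.End ℝ V)
    (hA : IsEruption n i j k F G H A) (hB : IsEruption n j' k' i' G H F B) :
    LinearMap.trace ℝ V (A ∘ₗ B) =
      max 0 (min ((i : ℝ) - (i' : ℝ)) ((j' : ℝ) - (j : ℝ))) - (i : ℝ) * (j' : ℝ) / (n : ℝ) :=
  statement7_general n V hV F G H hF hG hH hFGH i j k i' j' k' hijk hijk' A B hA hB
end

section
/- Let V be an n-dimensional real vector space and let (F,G,H) be a transverse triple of complete flags in V. Then the triples (G,H,F) and (F,H,G) are also transverse, and for all integers i,j,k ≥ 1 with i+j+k = n: T_{i,j,k}(F,G,H) = T_{j,k,i}(G,H,F) and T_{i,j,k}(F,G,H) · T_{i,k,j}(F,H,G) = 1. -/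
/-- `f` (whose values `f 0, …, f (n-1)` matter) is a basis adapted to the flag `F`:
`F l` is the span of `f 0, …, f (l-1)` for all `0 ≤ l ≤ n`. -/
def Adapted (n : ℕ) {V : Type*} [AddCommGroup V] [Module ℝ V]
    (F : ℕ → Submodule ℝ V) (f : ℕ → V) : Prop :=
  ∀ l, l ≤ n → F l = Submodule.span ℝ (f '' Set.Iio l)

/-- `F^(a) ∧ G^(b) ∧ H^(c) := ω (f 0, …, f (a-1), g 0, …, g (b-1), h 0, …, h (c-1))`,
for `a + b + c = n`. -/
noncomputable def wedge (n : ℕ) {V : Type*} [AddCommGroup V] [Module ℝ V]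
    (ω : AlternatingMap ℝ V ℝ (Fin n)) (f g h : ℕ → V) (a b c : ℕ) : ℝ :=
  ω fun l : Fin n =>
    if (l : ℕ) < a then f (l : ℕ)
    else if (l : ℕ) < a + b then g ((l : ℕ) - a)
    else h ((l : ℕ) - a - b)

/-- The triple ratio `T_{i,j,k}(F,G,H)` computed with adapted bases `f, g, h` of the
flags `F, G, H` and the nonzero alternating `n`-form `ω`. -/
noncomputable def tripleRatio (n : ℕ) {V : Type*} [AddCommGroup V] [Module ℝ V]
    (ω : AlternatingMap ℝ V ℝ (Fin n)) (f g h : ℕ → V) (i j k : ℕ) : ℝ :=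
  (wedge n ω f g h (i + 1) j (k - 1) / wedge n ω f g h (i + 1) (j - 1) k) *
  (wedge n ω f g h (i - 1) (j + 1) k / wedge n ω f g h i (j + 1) (k - 1)) *
  (wedge n ω f g h i (j - 1) (k + 1) / wedge n ω f g h (i - 1) j (k + 1))

/-
Permuting the three blocks of vectors inside `ω` only changes a wedge by a sign: moving a block
of `a` vectors past a block of `d` vectors is a power of a cyclic shift and multiplies it by
`(-1)^(a d)`. In `T_{j,k,i}(G,H,F)` the sign of each wedge depends only on the size of the
`F`-block, and each size occurs once upstairs and once downstairs, so the signs cancel. The wedges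
of `T_{i,k,j}(F,H,G)` are, up to sign, those of `T_{i,j,k}(F,G,H)` with numerators and denominators
exchanged, and the signs again cancel in total; transversality makes every wedge nonzero, so the
product of the two ratios is `1`.
-/

theorem Fin.val_cycleIcc_last_pow {m : ℕ} (i : Fin (m + 1)) (q : ℕ) (l : Fin (m + 1)) :
    ((cycleIcc i (Fin.last m) ^ q) l : ℕ) =
      if l < i then (l : ℕ) else i + ((l : ℕ) - i + q) % (m + 1 - i) := by
  induction q with
  | zero =>
    split_ifs with hl
    · rfl
    · rw [pow_zero, Equiv.Perm.one_apply, Nat.add_zero ((l : ℕ) - i),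
        Nat.mod_eq_of_lt (a := (l : ℕ) - i) (by omega)]
      omega
  | succ q ih =>
    rw [pow_succ', Equiv.Perm.mul_apply]
    split_ifs at ih ⊢ with hl
    · rw [cycleIcc_of_lt (by rw [Fin.lt_def, ih]; exact hl)]
      exact ih
    · set r := ((l : ℕ) - i + q) % (m + 1 - i)
      have hr : r < m + 1 - i := Nat.mod_lt _ (by omega)
      have hsucc : ((l : ℕ) - i + (q + 1)) % (m + 1 - i) = (r + 1) % (m + 1 - i) := by
        rw [← Nat.add_assoc, Nat.mod_add_mod]
      rw [cycleIcc_of_le_of_le (by rw [Fin.le_def, ih]; omega) (Fin.le_last _), hsucc]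
      split_ifs with hlast
      · rw [Fin.ext_iff, ih, Fin.val_last] at hlast
        rw [show r + 1 = m + 1 - i by omega, Nat.mod_self]
        rfl
      · rw [Fin.ext_iff, ih, Fin.val_last] at hlast
        rw [Fin.val_add_one_of_lt' (by rw [ih]; omega), ih, Nat.mod_eq_of_lt (by omega)]
        omega

theorem AlternatingMap.map_rotate_tail {R M N : Type*} [Semiring R] [AddCommMonoid M] [Module R M]
    [AddCommGroup N] [Module R N] {m : ℕ} (ω : M [⋀^Fin (m + 1)]→ₗ[R] N) (u : ℕ → M)
    {p : ℕ} (hp : p ≤ m) (q : ℕ) :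
    ω (fun l => u (if (l : ℕ) < p then l else p + ((l : ℕ) - p + q) % (m + 1 - p))) =
      ((-1 : ℤˣ) ^ ((m - p) * q)) • ω (fun l => u l) := by
  have key := ω.map_perm (fun l => u l) (Fin.cycleIcc ⟨p, by omega⟩ (Fin.last m) ^ q)
  simp only [Function.comp_def, Fin.val_cycleIcc_last_pow, Fin.lt_def] at key
  rw [key, map_pow, Fin.sign_cycleIcc_of_le (Fin.le_last _), ← pow_mul]
  rfl

theorem neg_one_pow_units_smul {R : Type*} [Ring R] (e : ℕ) (x : R) :
    ((-1 : ℤˣ) ^ e) • x = (-1 : R) ^ e * x := by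
  simp [Units.smul_def, zsmul_eq_mul]

theorem neg_one_pow_mul_eq_of_add_eq_succ {R : Type*} [Monoid R] [HasDistribNeg R] {a d m : ℕ}
    (h : a + d = m + 1) : (-1 : R) ^ (m * a) = (-1) ^ (a * d) := by
  have hsplit : m * a = a * d + a * (a - 1) := by
    rcases a with _ | a
    · simp
    · simp only [Nat.add_sub_cancel]; nlinarith
  rw [hsplit, pow_add, (Nat.even_mul_pred_self a).neg_one_pow, mul_one]

theorem AlternatingMap.map_ne_zero_of_top_le_span {K V ι : Type*} [Field K] [AddCommGroup V]
    [Module K V] [Fintype ι] {ω : V [⋀^ι]→ₗ[K] K} (hω : ω ≠ 0) {v : ι → V}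
    (hv : ⊤ ≤ Submodule.span K (Set.range v)) (hcard : Fintype.card ι = Module.finrank K V) :
    ω v ≠ 0 := by
  simpa using (ω.map_basis_ne_zero_iff (basisOfTopLeSpanOfCardEqFinrank v hv hcard)).mpr hω

section

variable {n : ℕ} {V : Type*} [AddCommGroup V] [Module ℝ V]
  {F G H : ℕ → Submodule ℝ V} (ω : AlternatingMap ℝ V ℝ (Fin n)) (f g h : ℕ → V)

theorem TransverseTriple.rotate_s13 (hFGH : TransverseTriple n F G H) : TransverseTriple n G H F :=
  fun a b c habc => by rw [sup_comm, ← sup_assoc]; exact hFGH c a b (by omega)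

theorem TransverseTriple.swap (hFGH : TransverseTriple n F G H) : TransverseTriple n F H G :=
  fun a b c habc => by rw [sup_right_comm]; exact hFGH a c b (by omega)

theorem wedge_rotate {a b c : ℕ} (hn : a + b + c = n) :
    wedge n ω g h f b c a = (-1) ^ (a * (b + c)) * wedge n ω f g h a b c := by
  cases n with
  | zero =>
    obtain ⟨rfl, rfl, rfl⟩ : a = 0 ∧ b = 0 ∧ c = 0 := by omega
    simp only [wedge, Nat.zero_mul, pow_zero, one_mul]
    congr 1
    exact Subsingleton.elim _ _
  | succ m =>
    have key := ω.map_rotate_tail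
      (fun x => if x < a then f x else if x < a + b then g (x - a) else h (x - a - b))
      (Nat.zero_le m) a
    rw [neg_one_pow_units_smul, Nat.sub_zero m,
      neg_one_pow_mul_eq_of_add_eq_succ (by omega : a + (b + c) = m + 1)] at key
    rw [wedge, wedge, ← key]
    congr 1
    funext l
    have hl := l.isLt
    simp only [Nat.not_lt_zero, if_false, Nat.sub_zero, Nat.zero_add]
    rcases lt_or_ge (l : ℕ) (b + c) with hlt | hge
    · rw [Nat.mod_eq_of_lt (by omega)]
      split_ifs <;> first | omega | (congr 1; omega)
    · rw [Nat.mod_eq_sub_mod (by omega), Nat.mod_eq_of_lt (by omega)]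
      split_ifs <;> first | omega | (congr 1; omega)

theorem wedge_swap {a b c : ℕ} (hn : a + b + c = n) :
    wedge n ω f h g a c b = (-1) ^ (b * c) * wedge n ω f g h a b c := by
  rcases Nat.eq_zero_or_pos (b + c) with hbc0 | hbc
  · obtain ⟨rfl, rfl⟩ : b = 0 ∧ c = 0 := by omega
    simp only [wedge, Nat.zero_mul, pow_zero, one_mul, Nat.add_zero]
    congr 1
    funext l
    have := l.isLt
    split_ifs <;> first | rfl | omega
  obtain ⟨m, rfl⟩ : ∃ m, n = m + 1 := ⟨n - 1, by omega⟩
  have key := ω.map_rotate_tail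
    (fun x => if x < a then f x else if x < a + b then g (x - a) else h (x - a - b))
    (show a ≤ m by omega) b
  rw [neg_one_pow_units_smul,
    neg_one_pow_mul_eq_of_add_eq_succ (by omega : b + c = m - a + 1)] at key
  rw [wedge, wedge, ← key]
  congr 1
  funext l
  have hl := l.isLt
  by_cases hla : (l : ℕ) < a
  · simp only [hla, if_true]
  simp only [hla, if_false]
  rcases lt_or_ge (l : ℕ) (a + c) with hlt | hge
  · rw [Nat.mod_eq_of_lt (by omega)]
    split_ifs <;> first | omega | (congr 1; omega)
  · rw [Nat.mod_eq_sub_mod (by omega), Nat.mod_eq_of_lt (by omega)]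
    split_ifs <;> first | omega | (congr 1; omega)

theorem tripleRatio_rotate {i j k : ℕ} (hi : 1 ≤ i) (hj : 1 ≤ j) (hk : 1 ≤ k)
    (hn : i + j + k = n) :
    tripleRatio n ω g h f j k i = tripleRatio n ω f g h i j k := by
  obtain ⟨i, rfl⟩ := Nat.exists_eq_add_of_le' hi
  obtain ⟨j, rfl⟩ := Nat.exists_eq_add_of_le' hj
  obtain ⟨k, rfl⟩ := Nat.exists_eq_add_of_le' hk
  simp only [tripleRatio, Nat.add_sub_cancel]
  simp (disch := omega) only [wedge_rotate ω f g h]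
  -- once normalised, every remaining sign occurs squared
  ring_nf
  field_simp
  simp only [pow_right_comm _ _ 2, neg_one_sq, one_pow, mul_one]

theorem tripleRatio_swap {i j k : ℕ} (hi : 1 ≤ i) (hj : 1 ≤ j) (hk : 1 ≤ k)
    (hn : i + j + k = n) :
    tripleRatio n ω f h g i k j = (tripleRatio n ω f g h i j k)⁻¹ := by
  obtain ⟨i, rfl⟩ := Nat.exists_eq_add_of_le' hi
  obtain ⟨j, rfl⟩ := Nat.exists_eq_add_of_le' hj
  obtain ⟨k, rfl⟩ := Nat.exists_eq_add_of_le' hk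
  simp only [tripleRatio, Nat.add_sub_cancel]
  simp (disch := omega) only [wedge_swap ω f g h]
  -- once normalised, every remaining sign occurs squared
  ring_nf
  field_simp
  simp only [pow_right_comm _ _ 2, neg_one_sq, one_pow, mul_one]

theorem wedge_ne_zero (hV : Module.finrank ℝ V = n)
    (hFGH : TransverseTriple n F G H) (hω : ω ≠ 0)
    (hf : Adapted n F f) (hg : Adapted n G g) (hh : Adapted n H h) {a b c : ℕ}
    (hn : a + b + c = n) : wedge n ω f g h a b c ≠ 0 := by
  refine ω.map_ne_zero_of_top_le_span hω ?_ (by simp [hV])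
  rw [← hFGH a b c hn, hf a (by omega), hg b (by omega), hh c (by omega)]
  refine sup_le (sup_le ?_ ?_) ?_ <;> refine Submodule.span_mono ?_ <;>
    rintro _ ⟨t, ht : t < _, rfl⟩
  · exact ⟨⟨t, by omega⟩, by simp [ht]⟩
  · exact ⟨⟨a + t, by omega⟩, by simp [ht]⟩
  · exact ⟨⟨a + b + t, by omega⟩, by simp [Nat.add_assoc]⟩

theorem tripleRatio_ne_zero (hW : ∀ a b c, a + b + c = n → wedge n ω f g h a b c ≠ 0)
    {i j k : ℕ} (hi : 1 ≤ i) (hj : 1 ≤ j) (hk : 1 ≤ k) (hn : i + j + k = n) :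
    tripleRatio n ω f g h i j k ≠ 0 := by
  refine mul_ne_zero (mul_ne_zero ?_ ?_) ?_ <;>
    exact div_ne_zero (hW _ _ _ (by omega)) (hW _ _ _ (by omega))

end

theorem statement13_general (n : ℕ) (V : Type*) [AddCommGroup V] [Module ℝ V]
    (hV : Module.finrank ℝ V = n)
    (F G H : ℕ → Submodule ℝ V)
    (hFGH : TransverseTriple n F G H)
    (ω : AlternatingMap ℝ V ℝ (Fin n)) (hω : ω ≠ 0)
    (f g h : ℕ → V) (hf : Adapted n F f) (hg : Adapted n G g) (hh : Adapted n H h) :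
    TransverseTriple n G H F ∧ TransverseTriple n F H G ∧
    ∀ i j k : ℕ, 1 ≤ i → 1 ≤ j → 1 ≤ k → i + j + k = n →
      tripleRatio n ω f g h i j k = tripleRatio n ω g h f j k i ∧
      tripleRatio n ω f g h i j k * tripleRatio n ω f h g i k j = 1 := by
  refine ⟨hFGH.rotate_s13, hFGH.swap, fun i j k hi hj hk hn => ⟨?_, ?_⟩⟩
  · exact (tripleRatio_rotate ω f g h hi hj hk hn).symm
  · rw [tripleRatio_swap ω f g h hi hj hk hn]
    exact mul_inv_cancel₀ <| tripleRatio_ne_zero ω f g h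
      (fun a b c habc => wedge_ne_zero ω f g h hV hFGH hω hf hg hh habc) hi hj hk hn

theorem statement13 (n : ℕ) (V : Type*) [AddCommGroup V] [Module ℝ V] [FiniteDimensional ℝ V]
    (hV : Module.finrank ℝ V = n)
    (F G H : ℕ → Submodule ℝ V) (hF : IsFlag n F) (hG : IsFlag n G) (hH : IsFlag n H)
    (hFGH : TransverseTriple n F G H)
    (ω : AlternatingMap ℝ V ℝ (Fin n)) (hω : ω ≠ 0)
    (f g h : ℕ → V) (hf : Adapted n F f) (hg : Adapted n G g) (hh : Adapted n H h) :
    TransverseTriple n G H F ∧ TransverseTriple n F H G ∧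
    ∀ i j k : ℕ, 1 ≤ i → 1 ≤ j → 1 ≤ k → i + j + k = n →
      tripleRatio n ω f g h i j k = tripleRatio n ω g h f j k i ∧
      tripleRatio n ω f g h i j k * tripleRatio n ω f h g i k j = 1 :=
  statement13_general n V hV F G H hFGH ω hω f g h hf hg hh
end
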